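/- Let (α_t)_{t≥0} be a strongly continuous semigroup of positive linear contractions on Lᵖ(m) for a σ-finite measure space (S, F, m), 1 ≤ p < ∞. For T > 0 define β_T(x) = (1/T)∫₀^T α_t(x) dt. Then for every x ∈ Lᵖ with x ≥ 0 and all a, b > 0: −(1/b)∫₀^a α_s(x) ds ≤ β_a(β_b(x)) − β_b(x) ≤ (1/b)∫_b^{b+a} α_s(x) ds, where the inequalities are pointwise almost everywhere (equivalently, in the order of Lᵖ). -/

import Mathlib

/-!
By the semigroup law, `α_s` shifts the window of the average `β_b x` to `[s, s + b]`, so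
`α_s (β_b x) - β_b x = b⁻¹ (∫_b^{s+b} α_t x dt - ∫_0^s α_t x dt)`.
For `x ≥ 0` both integrals are nonnegative and grow with `s`, which traps this difference between
`-b⁻¹ ∫_0^a α_t x dt` and `b⁻¹ ∫_b^{b+a} α_t x dt` for `s ∈ [0, a]`. Since
`β_a (β_b x) - β_b x` is the average over `s ∈ [0, a]` of `α_s (β_b x) - β_b x`, and averaging
preserves order bounds (the positive cone of `Lᵖ` is closed), the same bounds hold for it.
-/

open MeasureTheory Filter Topology intervalIntegral
open scoped ENNReal

namespace MeasureTheory.Lp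

variable {X E : Type*} [MeasurableSpace X] {μ : Measure X} {p : ℝ≥0∞} [NormedAddCommGroup E]
  [NormedSpace ℝ E] [PartialOrder E] [IsOrderedAddMonoid E] [IsOrderedModule ℝ E]

instance instIsOrderedModule : IsOrderedModule ℝ (Lp E p μ) :=
  .of_smul_nonneg fun c hc f hf ↦ by
    rw [← coeFn_nonneg] at hf ⊢
    filter_upwards [coeFn_smul c f, hf] with u hcf hfu
    rw [hcf, Pi.smul_apply]
    exact smul_nonneg hc hfu

end MeasureTheory.Lp

namespace intervalIntegral

variable {E : Type*} [NormedAddCommGroup E] [NormedSpace ℝ E] [PartialOrder E]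
  [IsOrderedAddMonoid E] [IsOrderedModule ℝ E] [ClosedIciTopology E] {f g : ℝ → E} {a b c d : ℝ}

theorem integral_nonneg_of_forall_mem_Icc (hab : a ≤ b) (hf : ∀ u ∈ Set.Icc a b, 0 ≤ f u) :
    0 ≤ ∫ u in a..b, f u := by
  rw [integral_of_le hab]
  exact MeasureTheory.integral_nonneg_of_ae <| (ae_restrict_iff' measurableSet_Ioc).2 <|
    ae_of_all _ fun u hu ↦ hf u (Set.Ioc_subset_Icc_self hu)

theorem integral_mono_on_Icc (hab : a ≤ b) (hf : IntervalIntegrable f volume a b)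
    (hg : IntervalIntegrable g volume a b) (h : ∀ u ∈ Set.Icc a b, f u ≤ g u) :
    ∫ u in a..b, f u ≤ ∫ u in a..b, g u := by
  rw [← sub_nonneg, ← integral_sub hg hf]
  exact integral_nonneg_of_forall_mem_Icc hab fun u hu ↦ sub_nonneg.2 (h u hu)

theorem integral_mono_right_of_forall_mem_Icc (hbc : b ≤ c) (hab : IntervalIntegrable f volume a b)
    (hac : IntervalIntegrable f volume a c) (hf : ∀ u ∈ Set.Icc b c, 0 ≤ f u) :
    ∫ u in a..b, f u ≤ ∫ u in a..c, f u := by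
  rw [← sub_nonneg, integral_interval_sub_left hac hab]
  exact integral_nonneg_of_forall_mem_Icc hbc hf

theorem inv_sub_smul_integral_mem_Icc [CompleteSpace E] {L U : E} (hab : a < b)
    (hg : IntervalIntegrable g volume a b)
    (h : ∀ u ∈ Set.Icc a b, g u ∈ Set.Icc L U) :
    (b - a)⁻¹ • ∫ u in a..b, g u ∈ Set.Icc L U := by
  have hba : 0 < b - a := sub_pos.2 hab
  have mean_const (v : E) : (b - a)⁻¹ • ∫ _ in a..b, v = v := by
    rw [integral_const, smul_smul, inv_mul_cancel₀ hba.ne', one_smul]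
  constructor
  · calc L = (b - a)⁻¹ • ∫ _ in a..b, L := (mean_const L).symm
      _ ≤ _ := smul_le_smul_of_nonneg_left (integral_mono_on_Icc hab.le intervalIntegrable_const
          hg fun u hu ↦ (h u hu).1) (inv_nonneg.2 hba.le)
  · calc _ ≤ (b - a)⁻¹ • ∫ _ in a..b, U := smul_le_smul_of_nonneg_left (integral_mono_on_Icc
          hab.le hg intervalIntegrable_const fun u hu ↦ (h u hu).2) (inv_nonneg.2 hba.le)
      _ = U := mean_const U

end intervalIntegral

section Semigroup

variable {E : Type*} [NormedAddCommGroup E] [NormedSpace ℝ E]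

noncomputable def ergodicAverage (α : ℝ → E →L[ℝ] E) (T : ℝ) (x : E) : E :=
  T⁻¹ • ∫ t in (0 : ℝ)..T, α t x

variable [CompleteSpace E] {α : ℝ → E →L[ℝ] E} {x : E} {a b s : ℝ}

theorem apply_intervalIntegral_eq_of_semigroup
    (hsemigroup : ∀ t s : ℝ, 0 ≤ t → 0 ≤ s → ∀ x, α t (α s x) = α (t + s) x)
    (hx : IntervalIntegrable (fun t ↦ α t x) volume 0 b) (hb : 0 ≤ b) (hs : 0 ≤ s) :
    α s (∫ t in (0 : ℝ)..b, α t x) = ∫ t in s..s + b, α t x := by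
  rw [← ContinuousLinearMap.intervalIntegral_comp_comm (α s) hx]
  have shift : Set.EqOn (fun t ↦ α s (α t x)) (fun t ↦ α (s + t) x) (Set.uIcc 0 b) :=
    fun t ht ↦ hsemigroup s t hs (by rw [Set.uIcc_of_le hb] at ht; exact ht.1) x
  rw [integral_congr shift, integral_comp_add_left (fun u ↦ α u x) s, add_zero]

theorem apply_ergodicAverage_sub_ergodicAverage
    (hsemigroup : ∀ t s : ℝ, 0 ≤ t → 0 ≤ s → ∀ x, α t (α s x) = α (t + s) x)
    (hx : Continuous fun t ↦ α t x) (hb : 0 ≤ b) (hs : 0 ≤ s) :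
    α s (ergodicAverage α b x) - ergodicAverage α b x =
      b⁻¹ • ((∫ t in b..s + b, α t x) - ∫ t in (0 : ℝ)..s, α t x) := by
  have hint (c d : ℝ) : IntervalIntegrable (fun t ↦ α t x) volume c d := hx.intervalIntegrable c d
  rw [ergodicAverage, map_smul, apply_intervalIntegral_eq_of_semigroup hsemigroup (hint 0 b) hb hs,
    ← smul_sub, integral_interval_sub_interval_comm' (hint _ _) (hint _ _) (hint _ _)]

theorem ergodicAverage_sub_self (ha : a ≠ 0) (hx : IntervalIntegrable (fun t ↦ α t x) volume 0 a) :
    ergodicAverage α a x - x = a⁻¹ • ∫ t in (0 : ℝ)..a, (α t x - x) := by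
  rw [integral_sub hx intervalIntegrable_const, intervalIntegral.integral_const, sub_zero,
    smul_sub, smul_smul, inv_mul_cancel₀ ha, one_smul, ergodicAverage]

variable [PartialOrder E] [IsOrderedAddMonoid E] [IsOrderedModule ℝ E] [ClosedIciTopology E]

theorem apply_ergodicAverage_sub_ergodicAverage_mem_Icc
    (hsemigroup : ∀ t s : ℝ, 0 ≤ t → 0 ≤ s → ∀ x, α t (α s x) = α (t + s) x)
    (hpos : ∀ t, 0 ≤ t → 0 ≤ α t x) (hx : Continuous fun t ↦ α t x) (hb : 0 < b)
    (hs : s ∈ Set.Icc 0 a) :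
    α s (ergodicAverage α b x) - ergodicAverage α b x ∈
      Set.Icc (-(b⁻¹ • ∫ t in (0 : ℝ)..a, α t x)) (b⁻¹ • ∫ t in b..b + a, α t x) := by
  have hint (c d : ℝ) : IntervalIntegrable (fun t ↦ α t x) volume c d := hx.intervalIntegrable c d
  have hb' : 0 ≤ b⁻¹ := inv_nonneg.2 hb.le
  have hpos_on {c d : ℝ} (hc : 0 ≤ c) : ∀ t ∈ Set.Icc c d, 0 ≤ α t x :=
    fun t ht ↦ hpos t (hc.trans ht.1)
  rw [apply_ergodicAverage_sub_ergodicAverage hsemigroup hx hb.le hs.1]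
  constructor
  · calc -(b⁻¹ • ∫ t in (0 : ℝ)..a, α t x)
        ≤ -(b⁻¹ • ∫ t in (0 : ℝ)..s, α t x) := neg_le_neg <| smul_le_smul_of_nonneg_left
          (integral_mono_right_of_forall_mem_Icc hs.2 (hint _ _) (hint _ _) (hpos_on hs.1)) hb'
      _ = b⁻¹ • (0 - ∫ t in (0 : ℝ)..s, α t x) := by rw [zero_sub, smul_neg]
      _ ≤ _ := smul_le_smul_of_nonneg_left (sub_le_sub_right
          (integral_nonneg_of_forall_mem_Icc (by linarith [hs.1]) (hpos_on hb.le)) _) hb'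
  · calc _ ≤ b⁻¹ • ∫ t in b..s + b, α t x := smul_le_smul_of_nonneg_left
          (sub_le_self _ (integral_nonneg_of_forall_mem_Icc hs.1 (hpos_on le_rfl))) hb'
      _ ≤ _ := smul_le_smul_of_nonneg_left (integral_mono_right_of_forall_mem_Icc
          (by linarith [hs.2]) (hint _ _) (hint _ _) (hpos_on (by linarith [hs.1]))) hb'

theorem ergodicAverage_ergodicAverage_sub_mem_Icc
    (hsemigroup : ∀ t s : ℝ, 0 ≤ t → 0 ≤ s → ∀ x, α t (α s x) = α (t + s) x)
    (hpos : ∀ t, 0 ≤ t → 0 ≤ α t x) (hcont : ∀ y, Continuous fun t ↦ α t y) (ha : 0 < a)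
    (hb : 0 < b) :
    ergodicAverage α a (ergodicAverage α b x) - ergodicAverage α b x ∈
      Set.Icc (-(b⁻¹ • ∫ t in (0 : ℝ)..a, α t x)) (b⁻¹ • ∫ t in b..b + a, α t x) := by
  rw [ergodicAverage_sub_self ha.ne' ((hcont _).intervalIntegrable 0 a)]
  simpa only [sub_zero, Pi.sub_apply] using inv_sub_smul_integral_mem_Icc ha
    (((hcont _).sub continuous_const).intervalIntegrable 0 a)
    fun s hs ↦ apply_ergodicAverage_sub_ergodicAverage_mem_Icc hsemigroup hpos (hcont x) hb hs

end Semigroup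

theorem local_ergodic_sandwich_general
    {S : Type*} [MeasurableSpace S] (m : Measure S)
    (p : ℝ≥0∞) [Fact (1 ≤ p)]
    (α : ℝ → (Lp ℝ p m →L[ℝ] Lp ℝ p m))
    (hsemigroup : ∀ t s : ℝ, 0 ≤ t → 0 ≤ s → ∀ x, α t (α s x) = α (t + s) x)
    (hpos : ∀ t : ℝ, 0 ≤ t → ∀ x : Lp ℝ p m, 0 ≤ x → 0 ≤ α t x)
    (hcont : ∀ x : Lp ℝ p m, Continuous fun t => α t x)
    (β : ℝ → Lp ℝ p m → Lp ℝ p m)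
    (hβ : ∀ T : ℝ, 0 < T → ∀ x, β T x = T⁻¹ • ∫ t in (0:ℝ)..T, α t x)
    (x : Lp ℝ p m) (hx : 0 ≤ x) (a b : ℝ) (ha : 0 < a) (hb : 0 < b) :
    -(b⁻¹ • ∫ s in (0:ℝ)..a, α s x) ≤ β a (β b x) - β b x ∧
      β a (β b x) - β b x ≤ b⁻¹ • ∫ s in b..(b + a), α s x := by
  rw [hβ a ha, hβ b hb]
  exact ergodicAverage_ergodicAverage_sub_mem_Icc hsemigroup (fun t ht ↦ hpos t ht x hx) hcont ha hb

/-- Commutative version of Lemma 3.2: for a strongly continuous semigroup of positive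
linear contractions on `Lᵖ`, with `β_T x = (1/T)∫₀^T α_t x dt`,
`-(1/b)∫₀^a α_s x ds ≤ β_a(β_b x) - β_b x ≤ (1/b)∫_b^{b+a} α_s x ds` for `x ≥ 0`. -/
theorem local_ergodic_sandwich
    {S : Type*} [MeasurableSpace S] (m : Measure S) [SigmaFinite m]
    (p : ℝ≥0∞) [Fact (1 ≤ p)] (hp' : p ≠ ∞)
    (α : ℝ → (Lp ℝ p m →L[ℝ] Lp ℝ p m))
    (hsemigroup : ∀ t s : ℝ, 0 ≤ t → 0 ≤ s → ∀ x, α t (α s x) = α (t + s) x)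
    (hid : α 0 = ContinuousLinearMap.id ℝ (Lp ℝ p m))
    (hpos : ∀ t : ℝ, 0 ≤ t → ∀ x : Lp ℝ p m, 0 ≤ x → 0 ≤ α t x)
    (hcontr : ∀ t : ℝ, 0 ≤ t → ∀ x : Lp ℝ p m, ‖α t x‖ ≤ ‖x‖)
    (hcont : ∀ x : Lp ℝ p m, Continuous fun t => α t x)
    (β : ℝ → Lp ℝ p m → Lp ℝ p m)
    (hβ : ∀ T : ℝ, 0 < T → ∀ x, β T x = T⁻¹ • ∫ t in (0:ℝ)..T, α t x)
    (x : Lp ℝ p m) (hx : 0 ≤ x) (a b : ℝ) (ha : 0 < a) (hb : 0 < b) :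
    -(b⁻¹ • ∫ s in (0:ℝ)..a, α s x) ≤ β a (β b x) - β b x ∧
      β a (β b x) - β b x ≤ b⁻¹ • ∫ s in b..(b + a), α s x :=
  local_ergodic_sandwich_general m p α hsemigroup hpos hcont β hβ x hx a b ha hb
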